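/- arXiv:2304.13475 — 4 statements merged into one kernel-verified Lean document; each statement's English description precedes it below -/
import Mathlib

section
/- If B is a skew left brace, then H_B = {(b, λ_b) : b ∈ B} is a regular subgroup of the holomorph Hol(B,+) = (B,+) ⋊ Aut(B,+), and H_B is isomorphic as a group to the multiplicative group (B,·). -/
/-- A skew left brace: a set with two group structures `(B,+)` and `(B,·)`
satisfying `a * (b + c) = a * b - a + a * c`. -/
class SkewBrace (B : Type*) extends AddGroup B, Group B where
  mul_add_dist : ∀ a b c : B, a * (b + c) = a * b - a + a * c

namespace SkewBraceDefs

variable {B : Type*} [SkewBrace B]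

/-- The lambda map `λ_a(b) = -a + a * b`. -/
def lam (a b : B) : B := -a + a * b

/-- A subbrace: a subgroup of both group structures. -/
def IsSubbrace (S : Set B) : Prop :=
  (∃ A : AddSubgroup B, (A : Set B) = S) ∧ (∃ M : Subgroup B, (M : Set B) = S)

/-- An ideal: a left ideal that is normal in both groups. -/
def IsIdeal (I : Set B) : Prop :=
  (∃ A : AddSubgroup B, (A : Set B) = I ∧ A.Normal) ∧
  (∃ M : Subgroup B, (M : Set B) = I ∧ M.Normal) ∧
  ∀ b : B, ∀ x ∈ I, lam b x ∈ I

/-- A maximal subbrace. -/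
def IsMaximalSubbrace (S : Set B) : Prop :=
  IsSubbrace S ∧ S ≠ Set.univ ∧
    ∀ T : Set B, IsSubbrace T → S ⊆ T → T = S ∨ T = Set.univ

/-- The centre `ζ(B) = {a | a + b = b + a = a·b = b·a for all b}` of a skew brace. -/
def zeta (B : Type*) [SkewBrace B] : Set B :=
  {a : B | ∀ b : B, a + b = b + a ∧ a * b = a + b ∧ b * a = a + b}

/-- The commutator `[I,J]`: the smallest ideal containing additive commutators,
multiplicative commutators, and the elements `i * j - (i + j)`. -/
def commIdeal (I J : Set B) : Set B :=
  ⋂₀ {K : Set B | IsIdeal K ∧ ∀ i ∈ I, ∀ j ∈ J,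
      i + j - i - j ∈ K ∧ i * j * i⁻¹ * j⁻¹ ∈ K ∧ i * j - (i + j) ∈ K}

/-- The Frattini subbrace: intersection of all maximal subbraces
(`Set.univ` if there are none). -/
def Frattini (B : Type*) [SkewBrace B] : Set B :=
  ⋂₀ {S : Set B | IsMaximalSubbrace S}

/-- `I` is an ideal of the subbrace `S`. -/
def IsIdealOf (I S : Set B) : Prop :=
  I ⊆ S ∧ (0 : B) ∈ I ∧ (∀ x ∈ I, ∀ y ∈ I, x + y ∈ I) ∧ (∀ x ∈ I, -x ∈ I) ∧
  (∀ x ∈ I, ∀ y ∈ I, x * y ∈ I) ∧ (∀ x ∈ I, x⁻¹ ∈ I) ∧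
  (∀ s ∈ S, ∀ x ∈ I, s + x - s ∈ I) ∧ (∀ s ∈ S, ∀ x ∈ I, s * x * s⁻¹ ∈ I) ∧
  (∀ s ∈ S, ∀ x ∈ I, lam s x ∈ I)

/-- An abelian ideal series `B = I 0 ⊇ I 1 ⊇ ... ⊇ I n = 0`, each `I (i+1)` an
ideal of `I i` with abelian factor brace `I i / I (i+1)`. -/
def IsAbelianSeries (I : ℕ → Set B) (n : ℕ) : Prop :=
  I 0 = Set.univ ∧ I n = {0} ∧
  ∀ i < n, IsIdealOf (I (i + 1)) (I i) ∧
    ∀ a ∈ I i, ∀ b ∈ I i,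
      -(b + a) + (a + b) ∈ I (i + 1) ∧ -(a + b) + a * b ∈ I (i + 1)

/-- Solubility of a skew brace: existence of an abelian ideal series. -/
def IsSoluble (B : Type*) [SkewBrace B] : Prop :=
  ∃ n : ℕ, ∃ I : ℕ → Set B, IsAbelianSeries I n

/-- The derived series `∂_0(B) = B`, `∂_{n+1}(B) = [∂_n(B), ∂_n(B)]`. -/
def derivedSeries (B : Type*) [SkewBrace B] : ℕ → Set B
  | 0 => Set.univ
  | n + 1 => commIdeal (derivedSeries B n) (derivedSeries B n)

end SkewBraceDefs

open SkewBraceDefs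

/-- The holomorph of the additive group `(B,+)`, as a semidirect product of
`(B,+)` (viewed multiplicatively) with its automorphism group. -/
abbrev AddHolomorph (B : Type*) [AddGroup B] :=
  SemidirectProduct (Multiplicative B) (MulAut (Multiplicative B))
    (MonoidHom.id (MulAut (Multiplicative B)))

/-!
The identity `a * b = a + λ_a b` says that `ofAdd : (B,·) → (B,+)` is a 1-cocycle for the action
`λ` of `(B,·)` on `(B,+)`, so `b ↦ (b, λ_b)` is a homomorphism into the holomorph; its image is
`H_B`, it is injective in the first coordinate, and regularity of `H_B` is the bijectivity of the
cocycle.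
-/

namespace SemidirectProduct

variable {N G H : Type*} [Group N] [Group G] [Group H] {φ : G →* MulAut N}

def homOfCocycle (f : H → N) (ψ : H →* G) (hf : ∀ a b, f (a * b) = f a * φ (ψ a) (f b)) :
    H →* N ⋊[φ] G where
  toFun h := ⟨f h, ψ h⟩
  map_one' := by
    have h1 : f 1 * f 1 = f 1 * 1 := by simpa using (hf 1 1).symm
    ext
    · exact mul_left_cancel h1
    · exact map_one ψ
  map_mul' a b := by ext <;> simp [hf]

variable {f : H → N} {ψ : H →* G} {hf : ∀ a b, f (a * b) = f a * φ (ψ a) (f b)}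

theorem mem_range_homOfCocycle {p : N ⋊[φ] G} :
    p ∈ (homOfCocycle f ψ hf).range ↔ ∃ h, p.left = f h ∧ p.right = ψ h := by
  constructor
  · rintro ⟨h, rfl⟩
    exact ⟨h, rfl, rfl⟩
  · rintro ⟨h, hl, hr⟩
    exact ⟨h, SemidirectProduct.ext hl.symm hr.symm⟩

theorem homOfCocycle_injective (hinj : Function.Injective f) :
    Function.Injective (homOfCocycle f ψ hf) :=
  fun _ _ hab => hinj (congrArg SemidirectProduct.left hab)

theorem existsUnique_mem_range_homOfCocycle (hbij : Function.Bijective f) (n : N) :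
    ∃! g : G, (⟨n, g⟩ : N ⋊[φ] G) ∈ (homOfCocycle f ψ hf).range := by
  obtain ⟨h₀, rfl⟩ := hbij.2 n
  refine ⟨ψ h₀, mem_range_homOfCocycle.2 ⟨h₀, rfl, rfl⟩, fun g hg => ?_⟩
  obtain ⟨h, hl, rfl⟩ := mem_range_homOfCocycle.1 hg
  rw [hbij.1 hl]

end SemidirectProduct

namespace SkewBrace

variable {B : Type*} [SkewBrace B]

theorem add_lam (a b : B) : a + lam a b = a * b := add_neg_cancel_left a (a * b)

theorem lam_add (a b c : B) : lam a (b + c) = lam a b + lam a c := by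
  simp only [lam, mul_add_dist, sub_eq_add_neg, add_assoc]

def lamAddHom (a : B) : B →+ B := AddMonoidHom.mk' (lam a) (lam_add a)

protected theorem mul_zero (a : B) : a * 0 = a := by
  have h : lam a 0 = 0 := map_zero (lamAddHom a)
  rw [← add_lam, h, add_zero]

theorem one_eq_zero : (1 : B) = 0 := (SkewBrace.mul_zero 1).symm.trans (one_mul 0)

theorem lam_one (c : B) : lam 1 c = c := by
  rw [lam, one_mul, one_eq_zero, neg_zero, zero_add]

theorem lam_mul (a b c : B) : lam (a * b) c = lam a (lam b c) := by
  have h : lam a (-b + b * c) = -lam a b + lam a (b * c) :=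
    (map_add (lamAddHom a) (-b) (b * c)).trans
      (congrArg (· + lam a (b * c)) (map_neg (lamAddHom a) b))
  calc lam (a * b) c = -lam a b + lam a (b * c) := by
        simp only [lam, mul_assoc, neg_add_rev, neg_neg, add_assoc, add_neg_cancel_left]
    _ = lam a (lam b c) := h.symm

def lamAut : B →* MulAut (Multiplicative B) where
  toFun a := AddEquiv.toMultiplicative
    { toFun := lam a
      invFun := lam a⁻¹
      map_add' := lam_add a
      left_inv := fun c => by rw [← lam_mul, inv_mul_cancel, lam_one]
      right_inv := fun c => by rw [← lam_mul, mul_inv_cancel, lam_one] }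
  map_one' := by
    ext c
    exact congrArg Multiplicative.ofAdd (lam_one c.toAdd)
  map_mul' a b := by
    ext c
    exact congrArg Multiplicative.ofAdd (lam_mul a b c.toAdd)

theorem lamAut_apply (a c : B) :
    lamAut a (Multiplicative.ofAdd c) = Multiplicative.ofAdd (lam a c) := rfl

theorem ofAdd_mul (a b : B) : Multiplicative.ofAdd (a * b) =
    Multiplicative.ofAdd a * lamAut a (Multiplicative.ofAdd b) := by
  rw [lamAut_apply, ← ofAdd_add, add_lam]

end SkewBrace

open SemidirectProduct SkewBrace in
/-- `H_B = {(b, λ_b) : b ∈ B}` is a regular subgroup of `Hol(B,+)`,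
isomorphic to the multiplicative group `(B,·)`. -/
theorem statement0 (B : Type*) [SkewBrace B] :
    ∃ H : Subgroup (AddHolomorph B),
      (∀ p : AddHolomorph B, p ∈ H ↔ ∃ b : B,
          p.left = Multiplicative.ofAdd b ∧
          ∀ c : B, p.right (Multiplicative.ofAdd c) = Multiplicative.ofAdd (lam b c)) ∧
      (∀ g : B, ∃! φ : MulAut (Multiplicative B),
          (⟨Multiplicative.ofAdd g, φ⟩ : AddHolomorph B) ∈ H) ∧
      Nonempty (B ≃* H) := by
  let e : B →* AddHolomorph B := homOfCocycle Multiplicative.ofAdd lamAut ofAdd_mul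
  refine ⟨e.range, fun p => ?_,
    fun g => existsUnique_mem_range_homOfCocycle (hf := ofAdd_mul) Multiplicative.ofAdd.bijective _,
    ⟨MonoidHom.ofInjective
      (homOfCocycle_injective (hf := ofAdd_mul) Multiplicative.ofAdd.injective)⟩⟩
  simp only [e, mem_range_homOfCocycle, MulEquiv.ext_iff, Multiplicative.forall, lamAut_apply]
end

section
/- Let B be a skew left brace and let J ⊆ I be ideals of B. Then I/J is contained in the centre ζ(B/J) of the quotient brace B/J if and only if the commutator ideal [I,B] is contained in J. -/
open SkewBraceDefs


section Aux

variable {B : Type*} [SkewBrace B]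

lemma sb_zero_eq_one : (0 : B) = 1 := by
  have h := SkewBrace.mul_add_dist (1 : B) 0 0
  simp only [add_zero, one_mul] at h
  -- h : (0 : B) = 0 - 1 + 0
  have : (0 : B) = -1 := by simpa [sub_eq_add_neg] using h
  simpa using congrArg Neg.neg this

lemma sb_mul_lam (a w : B) : a * w = a + lam a w := by
  simp [lam, ← add_assoc]

lemma sb_mul_neg_inv (a : B) : a * (-a⁻¹) = a + a := by
  have h := SkewBrace.mul_add_dist a (-a⁻¹) a⁻¹
  have h0 : a * ((0:B)) = a := by
    rw [sb_zero_eq_one]; simp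
  rw [neg_add_cancel, h0, mul_inv_cancel, ← sb_zero_eq_one, add_zero] at h
  -- h : a = a * (-a⁻¹) - a
  have := congrArg (· + a) h
  have h4 : a + a = a * (-a⁻¹) := by simpa [sub_eq_add_neg, add_assoc] using this
  exact h4.symm

lemma sb_add_eq_mul_lam (a u : B) : a + u = a * lam a⁻¹ u := by
  have h := SkewBrace.mul_add_dist a (-a⁻¹) (a⁻¹ * u)
  rw [sb_mul_neg_inv] at h
  have h2 : a * (a⁻¹ * u) = u := by rw [← mul_assoc, mul_inv_cancel, one_mul]
  rw [h2] at h
  have h3 : a * (-a⁻¹ + a⁻¹ * u) = a + u := by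
    rw [h]; simp [sub_eq_add_neg, add_assoc]
  rw [lam]; exact h3.symm

end Aux

/-- For ideals `J ⊆ I` of a skew brace `B`: `I/J ⊆ ζ(B/J)` (i.e. every element of
`I` is central modulo `J`) iff `[I,B] ⊆ J`. -/
theorem statement9 (B : Type*) [SkewBrace B] (I J : Set B)
    (hI : IsIdeal I) (hJ : IsIdeal J) (hJI : J ⊆ I) :
    (∀ x ∈ I, ∀ b : B,
        -(b + x) + (x + b) ∈ J ∧ -(x + b) + x * b ∈ J ∧ -(x + b) + b * x ∈ J)
      ↔ commIdeal I (Set.univ : Set B) ⊆ J := by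
  obtain ⟨⟨A, hA, hAn⟩, ⟨M, hM, hMn⟩, hJlam⟩ := hJ
  have hmemA : ∀ {x : B}, x ∈ J ↔ x ∈ A := fun {x} => by rw [← hA]; exact Iff.rfl
  have hmemM : ∀ {x : B}, x ∈ J ↔ x ∈ M := fun {x} => by rw [← hM]; exact Iff.rfl
  have hJadd : ∀ {x y : B}, x ∈ J → y ∈ J → x + y ∈ J := fun hx hy =>
    hmemA.2 (A.add_mem (hmemA.1 hx) (hmemA.1 hy))
  have hJconjA : ∀ {x : B}, x ∈ J → ∀ g : B, g + x + -g ∈ J := fun hx g =>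
    hmemA.2 (hAn.conj_mem _ (hmemA.1 hx) g)
  have hJconjM : ∀ {x : B}, x ∈ J → ∀ g : B, g * x * g⁻¹ ∈ J := fun hx g =>
    hmemM.2 (hMn.conj_mem _ (hmemM.1 hx) g)
  have hJmul : ∀ {x y : B}, x ∈ J → y ∈ J → x * y ∈ J := fun hx hy =>
    hmemM.2 (M.mul_mem (hmemM.1 hx) (hmemM.1 hy))
  have hJinv : ∀ {x : B}, x ∈ J → x⁻¹ ∈ J := fun hx => hmemM.2 (M.inv_mem (hmemM.1 hx))
  constructor
  · intro hc
    apply Set.sInter_subset_of_mem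
    refine ⟨⟨⟨A, hA, hAn⟩, ⟨M, hM, hMn⟩, hJlam⟩, ?_⟩
    intro i hi j _
    obtain ⟨h1, h2, h3⟩ := hc i hi j
    set a := i + j with ha
    obtain ⟨w2, hw2J, hw2⟩ : ∃ w, w ∈ J ∧ i * j = a * w :=
      ⟨_, hJlam _ _ h2, by rw [← sb_add_eq_mul_lam]; simp⟩
    obtain ⟨w3, hw3J, hw3⟩ : ∃ w, w ∈ J ∧ j * i = a * w :=
      ⟨_, hJlam _ _ h3, by rw [← sb_add_eq_mul_lam]; simp⟩
    refine ⟨?_, ?_, ?_⟩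
    · have he : i + j - i - j = a + (-(j + i) + (i + j)) + -a := by
        simp [ha, sub_eq_add_neg, neg_add_rev, add_assoc]
      rw [he]; exact hJconjA h1 a
    · have he : i * j * i⁻¹ * j⁻¹ = a * (w2 * w3⁻¹) * a⁻¹ := by
        rw [show i * j * i⁻¹ * j⁻¹ = (i * j) * (j * i)⁻¹ from by group, hw2, hw3]
        group
      rw [he]; exact hJconjM (hJmul hw2J (hJinv hw3J)) a
    · have he : i * j - (i + j) = a + (-a + i * j) + -a := by
        simp [ha, sub_eq_add_neg, add_assoc]
      rw [he]; exact hJconjA h2 a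
  · intro hcomm x hx b
    have hgen : ∀ i ∈ I, ∀ j : B,
        i + j - i - j ∈ J ∧ i * j * i⁻¹ * j⁻¹ ∈ J ∧ i * j - (i + j) ∈ J := by
      intro i hi j
      refine ⟨hcomm fun K hK => (hK.2 i hi j trivial).1,
        hcomm fun K hK => (hK.2 i hi j trivial).2.1,
        hcomm fun K hK => (hK.2 i hi j trivial).2.2⟩
    obtain ⟨⟨AI, hAI, _⟩, ⟨MI, hMI, _⟩, _⟩ := hI
    have hnegx : -x ∈ I := by
      rw [← hAI] at hx ⊢; exact AI.neg_mem hx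
    have hinvx : x⁻¹ ∈ I := by
      rw [← hMI] at hx ⊢; exact MI.inv_mem hx
    have hc2 : -(x + b) + x * b ∈ J := by
      have hg := (hgen x hx b).2.2
      have he : -(x + b) + x * b = -(x + b) + (x * b - (x + b)) + -(-(x + b)) := by
        simp [sub_eq_add_neg, add_assoc]
      rw [he]; exact hJconjA hg (-(x + b))
    refine ⟨?_, hc2, ?_⟩
    · have hg := (hgen (-x) hnegx (-b)).1
      have he : -(b + x) + (x + b) = -x + -b - -x - -b := by
        simp [sub_eq_add_neg, neg_add_rev, add_assoc]
      rw [he]; exact hg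
    · have hg := (hgen x⁻¹ hinvx b).2.1
      have hv : b⁻¹ * (x⁻¹ * b * x⁻¹⁻¹ * b⁻¹) * b⁻¹⁻¹ ∈ J := hJconjM hg b⁻¹
      have hveq : b⁻¹ * (x⁻¹ * b * x⁻¹⁻¹ * b⁻¹) * b⁻¹⁻¹ = b⁻¹ * x⁻¹ * b * x := by group
      rw [hveq] at hv
      have hbx : b * x = x * b + lam (x * b) (b⁻¹ * x⁻¹ * b * x) := by
        rw [← sb_mul_lam]; group
      have he : -(x + b) + b * x =
          (-(x + b) + x * b) + lam (x * b) (b⁻¹ * x⁻¹ * b * x) := by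
        rw [hbx, add_assoc]
      rw [he]; exact hJadd hc2 (hJlam _ _ hv)
end

section
/- Every simple soluble skew left brace is abelian and isomorphic (as a brace) to a cyclic group of prime order with trivial brace structure. -/
/-!
Take an abelian ideal series `B = I₀ ⊇ I₁ ⊇ ⋯ ⊇ Iₙ = 0`. Its first step `I₁` is an ideal of `B`,
so by simplicity either `I₁ = 0`, and then `B ≅ B / I₁` is abelian, or `I₁ = B`, and the series
can be shortened. Hence `B` is an abelian brace: `a * b = a + b` and `+` is commutative. In such a
brace every additive subgroup is an ideal, so `(B, +)` is a simple abelian group, i.e. cyclic of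
prime order.
-/

open SkewBraceDefs

namespace SkewBrace

variable {B : Type*} [SkewBrace B]

theorem zero_eq_one : (0 : B) = 1 := by
  have h := mul_add_dist (1 : B) 0 0
  rw [add_zero, one_mul] at h
  exact (by simpa using h : (1 : B) = 0).symm

theorem isIdeal_of_isIdealOf_univ {I : Set B} (h : IsIdealOf I Set.univ) : IsIdeal I := by
  obtain ⟨-, hzero, hadd, hneg, hmul, hinv, hconjAdd, hconjMul, hlam⟩ := h
  let A : AddSubgroup B :=
    { carrier := I, zero_mem' := hzero, add_mem' := fun ha hb => hadd _ ha _ hb,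
      neg_mem' := fun ha => hneg _ ha }
  let M : Subgroup B :=
    { carrier := I, one_mem' := zero_eq_one (B := B) ▸ hzero,
      mul_mem' := fun ha hb => hmul _ ha _ hb, inv_mem' := fun ha => hinv _ ha }
  refine ⟨⟨A, rfl, ⟨fun x hx g => ?_⟩⟩, ⟨M, rfl, ⟨fun x hx g => hconjMul g trivial x hx⟩⟩,
    fun b x hx => hlam b trivial x hx⟩
  simpa [A, sub_eq_add_neg] using hconjAdd g trivial x hx

theorem abelian_of_isAbelianSeries (hnz : ∃ x : B, x ≠ 0)
    (hsimple : ∀ I : Set B, IsIdeal I → I = {(0 : B)} ∨ I = Set.univ)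
    {n : ℕ} {I : ℕ → Set B} (hI : IsAbelianSeries I n) :
    ∀ a b : B, a * b = a + b ∧ a + b = b + a := by
  induction n generalizing I with
  | zero =>
    obtain ⟨h0, hn, -⟩ := hI
    obtain ⟨x, hx⟩ := hnz
    have : x ∈ I 0 := h0 ▸ Set.mem_univ x
    rw [hn] at this
    exact absurd this hx
  | succ n ih =>
    obtain ⟨h0, hn, hstep⟩ := hI
    obtain ⟨hideal, habelian⟩ := hstep 0 n.succ_pos
    rw [h0] at hideal habelian
    rcases hsimple _ (isIdeal_of_isIdealOf_univ hideal) with h1 | h1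
    · intro a b
      obtain ⟨hcomm, hmul⟩ := habelian a trivial b trivial
      rw [h1, Set.mem_singleton_iff, neg_add_eq_zero] at hcomm hmul
      exact ⟨hmul.symm, hcomm.symm⟩
    · exact ih (I := fun i => I (i + 1))
        ⟨h1, hn, fun i hi => hstep (i + 1) (Nat.succ_lt_succ hi)⟩

section TrivialBrace

variable (hmul : ∀ a b : B, a * b = a + b)
include hmul

theorem inv_eq_neg_of_mul_eq_add (a : B) : a⁻¹ = -a :=
  inv_eq_of_mul_eq_one_right (by rw [hmul, add_neg_cancel, zero_eq_one])

theorem isIdeal_of_mul_eq_add (H : AddSubgroup B) [H.Normal] : IsIdeal (H : Set B) := by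
  let M : Subgroup B :=
    { carrier := H, one_mem' := zero_eq_one (B := B) ▸ H.zero_mem,
      mul_mem' := fun ha hb => hmul _ _ ▸ H.add_mem ha hb,
      inv_mem' := fun ha => (inv_eq_neg_of_mul_eq_add hmul _).symm ▸ H.neg_mem ha }
  refine ⟨⟨H, rfl, inferInstance⟩, ⟨M, rfl, ⟨fun x hx g => ?_⟩⟩, fun b x hx => ?_⟩
  · show g * x * g⁻¹ ∈ H
    rw [hmul, hmul, inv_eq_neg_of_mul_eq_add hmul]
    exact AddSubgroup.Normal.conj_mem inferInstance x hx g
  · rwa [lam, hmul, neg_add_cancel_left]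

theorem isSimpleAddGroup_of_mul_eq_add (hnz : ∃ x : B, x ≠ 0)
    (hsimple : ∀ I : Set B, IsIdeal I → I = {(0 : B)} ∨ I = Set.univ) :
    IsSimpleAddGroup B := by
  obtain ⟨x, hx⟩ := hnz
  refine { toNontrivial := ⟨⟨x, 0, hx⟩⟩, eq_bot_or_eq_top_of_normal := fun H _ => ?_ }
  exact (hsimple _ (isIdeal_of_mul_eq_add hmul H)).imp
    (fun h => SetLike.coe_injective h) (fun h => SetLike.coe_injective h)

end TrivialBrace

end SkewBrace

/-- A simple soluble skew left brace is abelian, cyclic of prime order. -/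
theorem statement11 (B : Type*) [SkewBrace B]
    (hnz : ∃ x : B, x ≠ 0)
    (hsimple : ∀ I : Set B, IsIdeal I → I = {(0 : B)} ∨ I = Set.univ)
    (hsol : IsSoluble B) :
    (∀ a b : B, a * b = a + b ∧ a + b = b + a) ∧ IsAddCyclic B ∧
      ∃ p : ℕ, p.Prime ∧ Nat.card B = p := by
  obtain ⟨n, I, hI⟩ := hsol
  have habelian := SkewBrace.abelian_of_isAbelianSeries hnz hsimple hI
  have : IsSimpleAddGroup B :=
    SkewBrace.isSimpleAddGroup_of_mul_eq_add (fun a b => (habelian a b).1) hnz hsimple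
  have : IsAddCommutative B := ⟨⟨fun a b => (habelian a b).2⟩⟩
  have hp : (Nat.card B).Prime := AddGroup.is_simple_iff_prime_card.mp ‹_›
  have : Fact (Nat.card B).Prime := ⟨hp⟩
  exact ⟨habelian, isAddCyclic_of_prime_card rfl, _, hp, rfl⟩
end

section
/- Let B be a finite skew left brace and S a maximal subbrace of B. Then ζ(B) ⊆ S or ∂(B) = [B,B] ⊆ S. Consequently ζ(B) ∩ ∂(B) is contained in the Frattini subbrace Φ(B). -/
open SkewBraceDefs

/-!
If `ζ(B) ⊄ S`, then `S + ζ(B)` is a subbrace strictly containing `S`, hence equal to `B`: it is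
the sum of `S` with a central additive subgroup and also, since `s + z = s * z` for central `z`,
the product of `S` with a central multiplicative subgroup. Write every element as `s + z` with
`s ∈ S` and `z` central. Central summands drop out of additive and multiplicative conjugates and
commutators, of `λ`, and of `a * b - (a + b)`, so `S` is an ideal containing every generator of
`[B,B]`.
-/

open Set
open scoped Pointwise

section CentralElements

variable {G : Type*} [Group G] {w w₁ w₂ : G}

@[to_additive]
theorem conj_mul_right_of_forall_commute (hw : ∀ g, Commute w g) (s b : G) :
    s * w * b * (s * w)⁻¹ = s * b * s⁻¹ := by
  rw [mul_assoc s w b, (hw b).eq]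
  group

@[to_additive]
theorem commutator_mul_right_of_forall_commute (h₁ : ∀ g, Commute w₁ g)
    (h₂ : ∀ g, Commute w₂ g) (s₁ s₂ : G) :
    s₁ * w₁ * (s₂ * w₂) * (s₁ * w₁)⁻¹ * (s₂ * w₂)⁻¹ = s₁ * s₂ * s₁⁻¹ * s₂⁻¹ := by
  rw [conj_mul_right_of_forall_commute h₁, ← mul_assoc, mul_assoc (s₁ * s₂) w₂, (h₂ _).eq]
  group

end CentralElements

namespace SkewBraceDefs

variable {B : Type*} [SkewBrace B]

theorem one_eq_zero : (1 : B) = 0 := by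
  simpa using SkewBrace.mul_add_dist (1 : B) 0 0

section Zeta

variable {z w w₁ w₂ : B}

theorem addCommute_of_mem_zeta (hz : z ∈ zeta B) (b : B) : AddCommute z b := (hz b).1

theorem mul_eq_add_of_mem_zeta (hz : z ∈ zeta B) (b : B) : z * b = z + b := (hz b).2.1

theorem mul_eq_add_of_mem_zeta_right (hz : z ∈ zeta B) (b : B) : b * z = b + z := by
  rw [(hz b).2.2, (hz b).1]

theorem commute_of_mem_zeta (hz : z ∈ zeta B) (b : B) : Commute z b :=
  (hz b).2.1.trans (hz b).2.2.symm

theorem zero_mem_zeta : (0 : B) ∈ zeta B := fun b => by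
  refine ⟨AddCommute.zero_left b, ?_, ?_⟩
  · rw [← one_eq_zero, one_mul, one_eq_zero, zero_add]
  · rw [← one_eq_zero, mul_one, one_eq_zero, zero_add]

theorem inv_eq_neg_of_mem_zeta (hz : z ∈ zeta B) : z⁻¹ = -z :=
  inv_eq_of_mul_eq_one_right <| by rw [mul_eq_add_of_mem_zeta hz, add_neg_cancel, one_eq_zero]

theorem neg_mem_zeta (hz : z ∈ zeta B) : -z ∈ zeta B := fun b => by
  have hmul : -z * b = -z + b := by
    rw [← inv_eq_neg_of_mem_zeta hz, inv_mul_eq_iff_eq_mul, mul_eq_add_of_mem_zeta hz,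
      inv_eq_neg_of_mem_zeta hz, add_neg_cancel_left]
  refine ⟨(addCommute_of_mem_zeta hz b).neg_left.eq, hmul, ?_⟩
  rw [← inv_eq_neg_of_mem_zeta hz, ((commute_of_mem_zeta hz b).inv_left).eq.symm,
    inv_eq_neg_of_mem_zeta hz, hmul]

theorem add_mem_zeta (hz : z ∈ zeta B) (hw : w ∈ zeta B) : z + w ∈ zeta B := fun b => by
  refine ⟨((addCommute_of_mem_zeta hz b).add_left (addCommute_of_mem_zeta hw b)).eq, ?_, ?_⟩
  · rw [add_assoc, ← mul_eq_add_of_mem_zeta hz w, mul_assoc, mul_eq_add_of_mem_zeta hw,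
      mul_eq_add_of_mem_zeta hz]
  · rw [SkewBrace.mul_add_dist, mul_eq_add_of_mem_zeta_right hz, mul_eq_add_of_mem_zeta_right hw,
      ← (addCommute_of_mem_zeta hz b).eq, add_sub_cancel_right,
      ← (addCommute_of_mem_zeta hw b).eq, add_assoc]

variable (B) in
def zetaAddSubgroup : AddSubgroup B where
  carrier := zeta B
  zero_mem' := zero_mem_zeta
  add_mem' := add_mem_zeta
  neg_mem' := neg_mem_zeta

variable (B) in
def zetaSubgroup : Subgroup B where
  carrier := zeta B
  one_mem' := one_eq_zero (B := B) ▸ zero_mem_zeta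
  mul_mem' {_ w} hz hw := (mul_eq_add_of_mem_zeta hz w).symm ▸ add_mem_zeta hz hw
  inv_mem' hz := (inv_eq_neg_of_mem_zeta hz).symm ▸ neg_mem_zeta hz

instance : (zetaAddSubgroup B).Normal :=
  ⟨fun n hn g => by rwa [← (addCommute_of_mem_zeta hn g).eq, add_neg_cancel_right]⟩

instance : (zetaSubgroup B).Normal :=
  ⟨fun n hn g => by rwa [← (commute_of_mem_zeta hn g).eq, mul_inv_cancel_right]⟩

theorem add_zeta_eq_mul_zeta (S : Set B) : S + zeta B = S * zeta B :=
  image2_congr fun _ _ _ hw => (mul_eq_add_of_mem_zeta_right hw _).symm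

theorem lam_mul_of_mem_zeta (hw : w ∈ zeta B) (s x : B) : lam (s * w) x = lam s x := by
  rw [lam, lam, mul_assoc, mul_eq_add_of_mem_zeta hw, SkewBrace.mul_add_dist,
    mul_eq_add_of_mem_zeta_right hw, sub_eq_add_neg, add_assoc, neg_add_cancel_left]

theorem mul_sub_add_of_mem_zeta (hw₁ : w₁ ∈ zeta B) (hw₂ : w₂ ∈ zeta B) (s₁ s₂ : B) :
    (s₁ + w₁) * (s₂ + w₂) - (s₁ + w₁ + (s₂ + w₂)) = s₁ * s₂ - (s₁ + s₂) := by
  rw [(addCommute_of_mem_zeta hw₁ s₂).add_add_add_comm, ← mul_eq_add_of_mem_zeta_right hw₁,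
    ← mul_eq_add_of_mem_zeta_right hw₂, (commute_of_mem_zeta hw₁ s₂).mul_mul_mul_comm,
    mul_eq_add_of_mem_zeta hw₁, mul_eq_add_of_mem_zeta_right (add_mem_zeta hw₁ hw₂),
    sub_eq_add_neg, sub_eq_add_neg, neg_add_rev, add_assoc, add_neg_cancel_left]

end Zeta

namespace IsSubbrace

variable {S : Set B} {x y : B}

theorem zero_mem (hS : IsSubbrace S) : (0 : B) ∈ S := by
  obtain ⟨A, rfl⟩ := hS.1
  exact A.zero_mem

theorem add_mem (hS : IsSubbrace S) (hx : x ∈ S) (hy : y ∈ S) : x + y ∈ S := by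
  obtain ⟨A, rfl⟩ := hS.1
  exact A.add_mem hx hy

theorem neg_mem (hS : IsSubbrace S) (hx : x ∈ S) : -x ∈ S := by
  obtain ⟨A, rfl⟩ := hS.1
  exact A.neg_mem hx

theorem mul_mem (hS : IsSubbrace S) (hx : x ∈ S) (hy : y ∈ S) : x * y ∈ S := by
  obtain ⟨M, rfl⟩ := hS.2
  exact M.mul_mem hx hy

theorem inv_mem (hS : IsSubbrace S) (hx : x ∈ S) : x⁻¹ ∈ S := by
  obtain ⟨M, rfl⟩ := hS.2
  exact M.inv_mem hx

theorem add_zeta (hS : IsSubbrace S) : IsSubbrace (S + zeta B) := by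
  obtain ⟨⟨A, rfl⟩, M, hM⟩ := hS
  refine ⟨⟨A ⊔ zetaAddSubgroup B, AddSubgroup.add_normal _ _⟩, M ⊔ zetaSubgroup B, ?_⟩
  rw [Subgroup.mul_normal, add_zeta_eq_mul_zeta, hM]
  rfl

theorem isIdeal_of_add_zeta_eq_univ (hS : IsSubbrace S) (h : S + zeta B = univ) :
    IsIdeal S := by
  have hdec (b : B) : ∃ s ∈ S, ∃ w ∈ zeta B, s + w = b := mem_add.mp (h ▸ mem_univ b)
  refine ⟨hS.1.imp fun A hA => ⟨hA, ⟨fun n hn g => ?_⟩⟩,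
    hS.2.imp fun M hM => ⟨hM, ⟨fun n hn g => ?_⟩⟩, fun b x hx => ?_⟩
  · obtain ⟨s, hs, w, hw, rfl⟩ := hdec g
    rw [← SetLike.mem_coe, hA] at hn ⊢
    rw [addConj_add_right_of_forall_addCommute (addCommute_of_mem_zeta hw)]
    exact hS.add_mem (hS.add_mem hs hn) (hS.neg_mem hs)
  · obtain ⟨s, hs, w, hw, rfl⟩ := hdec g
    rw [← SetLike.mem_coe, hM] at hn ⊢
    rw [← mul_eq_add_of_mem_zeta_right hw,
      conj_mul_right_of_forall_commute (commute_of_mem_zeta hw)]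
    exact hS.mul_mem (hS.mul_mem hs hn) (hS.inv_mem hs)
  · obtain ⟨s, hs, w, hw, rfl⟩ := hdec b
    rw [← mul_eq_add_of_mem_zeta_right hw, lam_mul_of_mem_zeta hw]
    exact hS.add_mem (hS.neg_mem hs) (hS.mul_mem hs hx)

theorem commIdeal_univ_subset_of_add_zeta_eq_univ (hS : IsSubbrace S)
    (h : S + zeta B = univ) : commIdeal univ univ ⊆ S := by
  have hdec (b : B) : ∃ s ∈ S, ∃ w ∈ zeta B, s + w = b := mem_add.mp (h ▸ mem_univ b)
  refine sInter_subset_of_mem ⟨hS.isIdeal_of_add_zeta_eq_univ h, fun i _ j _ => ?_⟩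
  obtain ⟨s₁, hs₁, w₁, hw₁, rfl⟩ := hdec i
  obtain ⟨s₂, hs₂, w₂, hw₂, rfl⟩ := hdec j
  refine ⟨?_, ?_, ?_⟩
  · rw [sub_eq_add_neg, sub_eq_add_neg, addCommutator_add_right_of_forall_addCommute
      (addCommute_of_mem_zeta hw₁) (addCommute_of_mem_zeta hw₂)]
    exact hS.add_mem (hS.add_mem (hS.add_mem hs₁ hs₂) (hS.neg_mem hs₁)) (hS.neg_mem hs₂)
  · rw [← mul_eq_add_of_mem_zeta_right hw₁, ← mul_eq_add_of_mem_zeta_right hw₂,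
      commutator_mul_right_of_forall_commute (commute_of_mem_zeta hw₁) (commute_of_mem_zeta hw₂)]
    exact hS.mul_mem (hS.mul_mem (hS.mul_mem hs₁ hs₂) (hS.inv_mem hs₁)) (hS.inv_mem hs₂)
  · rw [mul_sub_add_of_mem_zeta hw₁ hw₂, sub_eq_add_neg]
    exact hS.add_mem (hS.mul_mem hs₁ hs₂) (hS.neg_mem (hS.add_mem hs₁ hs₂))

end IsSubbrace

theorem IsMaximalSubbrace.zeta_subset_or_commIdeal_subset {S : Set B}
    (hS : IsMaximalSubbrace S) : zeta B ⊆ S ∨ commIdeal univ univ ⊆ S := by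
  obtain ⟨hS, -, hmax⟩ := hS
  refine or_iff_not_imp_left.mpr fun hzS => ?_
  rcases hmax _ hS.add_zeta (subset_add_left S zero_mem_zeta) with h | h
  · exact absurd (h ▸ subset_add_right (zeta B) hS.zero_mem) hzS
  · exact hS.commIdeal_univ_subset_of_add_zeta_eq_univ h

end SkewBraceDefs

theorem statement14_general (B : Type*) [SkewBrace B] :
    (∀ S : Set B, IsMaximalSubbrace S →
        zeta B ⊆ S ∨ commIdeal (Set.univ : Set B) Set.univ ⊆ S) ∧
    zeta B ∩ commIdeal (Set.univ : Set B) Set.univ ⊆ Frattini B :=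
  ⟨fun _ hS => hS.zeta_subset_or_commIdeal_subset, fun _ ⟨hxz, hxc⟩ =>
    mem_sInter.mpr fun _ hS =>
      (IsMaximalSubbrace.zeta_subset_or_commIdeal_subset hS).elim (· hxz) (· hxc)⟩

/-- For every maximal subbrace `S` of a finite skew brace `B`: `ζ(B) ⊆ S` or
`∂(B) = [B,B] ⊆ S`. Consequently `ζ(B) ∩ ∂(B) ⊆ Φ(B)`. -/
theorem statement14 (B : Type*) [SkewBrace B] [Finite B] :
    (∀ S : Set B, IsMaximalSubbrace S →
        zeta B ⊆ S ∨ commIdeal (Set.univ : Set B) Set.univ ⊆ S) ∧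
    zeta B ∩ commIdeal (Set.univ : Set B) Set.univ ⊆ Frattini B :=
  statement14_general B
end
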